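/- arXiv:1405.7481 — 2 statements merged into one kernel-verified Lean document; each statement's English description precedes it below -/
import Mathlib

section
/- Let Ω = {0,1}^∞, let X_1, X_2, … be the coordinate projections, and for n ≥ 1 let P_n be the σ-additive probability under which the coordinates are independent with P_n(X_k = 0) = 2^{−k} for k ≤ n and P_n(X_k = 0) = 1 for k > n; let P_∞ be the σ-additive probability with independent coordinates and P_∞(X_k = 0) = 2^{−k} for all k. Let λ be a finitely additive probability on (ℕ, 2^ℕ) vanishing on singletons and P = (1/2)P_∞ + (1/2)∫ P_n dλ(n). Then P_∞ ≪ P, P(ω^t) = P_∞(ω^t) for every cylinder ω^t, and for the event A = {ω : 1 appears infinitely often in ω}, P_∞(A|ω^t) − P(A|ω^t) = 1/2 for every ω and t; consequently P does not merge with P_∞. -/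
open Filter Topology


/-- A path in `{0,1}^∞`. -/
abbrev BinSeq := ℕ → Bool

/-- The cylinder of length `t` with base `ω`: all sequences agreeing with `ω`
in the first `t` coordinates. -/
def cyl {X : Type*} (ω : ℕ → X) (t : ℕ) : Set (ℕ → X) := {ω' | ∀ i < t, ω' i = ω i}

/-- An algebra of subsets of `Ω`. -/
structure SetAlgebra (Ω : Type*) where
  sets : Set (Set Ω)
  univ_mem : Set.univ ∈ sets
  compl_mem : ∀ S ∈ sets, Sᶜ ∈ sets
  union_mem : ∀ S ∈ sets, ∀ T ∈ sets, S ∪ T ∈ sets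

/-- The algebra is a σ-algebra: closed under countable unions. -/
def SetAlgebra.IsSigmaAlgebra {Ω : Type*} (A : SetAlgebra Ω) : Prop :=
  ∀ f : ℕ → Set Ω, (∀ n, f n ∈ A.sets) → (⋃ n, f n) ∈ A.sets

/-- The power-set algebra. -/
def SetAlgebra.top (Ω : Type*) : SetAlgebra Ω :=
  ⟨Set.univ, trivial, fun _ _ => trivial, fun _ _ _ _ => trivial⟩

/-- A finitely additive probability on `(Ω, A)`.  The function `m` is defined on all
subsets for convenience; only its values on `A.sets` are constrained. -/
structure FA {Ω : Type*} (A : SetAlgebra Ω) where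
  m : Set Ω → ℝ
  nonneg : ∀ S ∈ A.sets, 0 ≤ m S
  total : m Set.univ = 1
  add : ∀ S ∈ A.sets, ∀ T ∈ A.sets, Disjoint S T → m (S ∪ T) = m S + m T

/-- Conditional probability `P(E | C) = P(E ∩ C) / P(C)`. -/
noncomputable def FA.cond {Ω : Type*} {A : SetAlgebra Ω} (P : FA A) (E C : Set Ω) : ℝ :=
  P.m (E ∩ C) / P.m C

/-- `Q` is absolutely continuous w.r.t. `P` (written `Q ≪ P` in the paper):
for every sequence of events, `P(Eₙ) → 0` implies `Q(Eₙ) → 0`. -/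
def AbsCont {Ω : Type*} {A : SetAlgebra Ω} (P Q : FA A) : Prop :=
  ∀ E : ℕ → Set Ω, (∀ n, E n ∈ A.sets) →
    Tendsto (fun n => P.m (E n)) atTop (𝓝 0) → Tendsto (fun n => Q.m (E n)) atTop (𝓝 0)

/-- `P` merges with `Q`: for every `ε > 0`, the `Q`-probability of the set of paths where
some event has conditional probabilities (given the first `t` coordinates) differing by
more than `ε` tends to `0` as `t → ∞`.  (`sup_E |P(E|ωᵗ) - Q(E|ωᵗ)| > ε` is expressed
equivalently as `∃ E`.) -/
def Merges {A : SetAlgebra BinSeq} (P Q : FA A) : Prop :=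
  ∀ ε > 0, Tendsto
    (fun t => Q.m {ω | ∃ E ∈ A.sets, ε < |P.cond E (cyl ω t) - Q.cond E (cyl ω t)|})
    atTop (𝓝 0)

/-- Membership in the algebra `F` generated by the cylinders of `{0,1}^∞`:
the finite unions of cylinders (the empty union giving `∅`). -/
def InCylAlg (S : Set BinSeq) : Prop :=
  ∃ (n : ℕ) (f : Fin n → BinSeq × ℕ), S = ⋃ i, cyl (f i).1 (f i).2

/-- `Q` agrees with `P` on the algebra generated by cylinders, i.e. `Q` is an
extension of `P_F` from `F` to `Σ`. -/
def ExtAgree {A : SetAlgebra BinSeq} (P Q : FA A) : Prop :=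
  ∀ S, InCylAlg S → Q.m S = P.m S

/-- `P` is an extreme point of the set `E(P_F, F, Σ)` of extensions of its restriction
to the cylinder algebra: any representation of `P` as a nontrivial convex combination
of two extensions forces the two extensions to coincide (with `P`). -/
def ExtremePoint {A : SetAlgebra BinSeq} (P : FA A) : Prop :=
  ∀ Q R : FA A, ExtAgree P Q → ExtAgree P R →
    ∀ α : ℝ, 0 < α → α < 1 →
      (∀ S ∈ A.sets, P.m S = α * Q.m S + (1 - α) * R.m S) →
      ∀ S ∈ A.sets, Q.m S = R.m S

/-- `P` is strongly nonatomic (Savagean): every event can be split in any proportion. -/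
def StronglyNonatomic {Ω : Type*} {A : SetAlgebra Ω} (P : FA A) : Prop :=
  ∀ E ∈ A.sets, ∀ α : ℝ, 0 ≤ α → α ≤ 1 → ∃ F ∈ A.sets, F ⊆ E ∧ P.m F = α * P.m E

/-- The Blackwell–Dubins property: `P` merges with every `Q ≪ P`. -/
def BDProp {A : SetAlgebra BinSeq} (P : FA A) : Prop :=
  ∀ Q : FA A, AbsCont P Q → Merges P Q

/-- The event `A`: the outcome `1` appears infinitely often. -/
def infOften : Set BinSeq := {ω | ∀ T : ℕ, ∃ i ≥ T, ω i = true}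


/-!
Each `P_n` gives probability zero to "1 infinitely often" and agrees with `P_∞` on cylinders of
length at most `n`. As a diffuse `λ` gives mass one to every tail `{n ≥ t}`, the average
`∫ P_n dλ` agrees with `P_∞` on every cylinder `ωᵗ` but gives `A ∩ ωᵗ` mass zero, whereas
`P_∞(A) = 1` since under `P_∞` a run of `m` zeros has probability at most `2⁻ᵐ`. Hence
`P(A | ωᵗ) = 1/2` and `P_∞(A | ωᵗ) = 1` along every path. Absolute continuity is just
`P_∞ ≤ 2 P`.
-/

open MeasureTheory
open scoped ENNReal

lemma SetAlgebra.empty_mem {Ω : Type*} (A : SetAlgebra Ω) : ∅ ∈ A.sets := by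
  simpa using A.compl_mem _ A.univ_mem

lemma SetAlgebra.diff_mem {Ω : Type*} (A : SetAlgebra Ω) {S T : Set Ω} (hS : S ∈ A.sets)
    (hT : T ∈ A.sets) : S \ T ∈ A.sets := by
  have h := A.compl_mem _ (A.union_mem _ (A.compl_mem S hS) T hT)
  rwa [Set.compl_union, compl_compl, ← Set.sdiff_eq] at h

namespace FA

variable {Ω : Type*} {A : SetAlgebra Ω} (P : FA A)

lemma m_empty : P.m ∅ = 0 := by
  have h := P.add ∅ A.empty_mem ∅ A.empty_mem (Set.disjoint_empty _)
  rw [Set.union_empty] at h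
  linarith

lemma m_compl {S : Set Ω} (hS : S ∈ A.sets) : P.m Sᶜ = 1 - P.m S := by
  have h := P.add S hS Sᶜ (A.compl_mem S hS) disjoint_compl_right
  rw [Set.union_compl_self, P.total] at h
  linarith

lemma m_mono {S T : Set Ω} (hS : S ∈ A.sets) (hT : T ∈ A.sets) (hST : S ⊆ T) :
    P.m S ≤ P.m T := by
  have h := P.add S hS (T \ S) (A.diff_mem hT hS) disjoint_sdiff_self_right
  rw [Set.union_sdiff_cancel hST] at h
  linarith [P.nonneg _ (A.diff_mem hT hS)]

lemma m_le_one {S : Set Ω} (hS : S ∈ A.sets) : P.m S ≤ 1 :=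
  P.total ▸ P.m_mono hS A.univ_mem (Set.subset_univ S)

end FA

section Diffuse

variable {lam : FA (SetAlgebra.top ℕ)} (hlam : ∀ k : ℕ, lam.m {k} = 0)
include hlam

lemma FA.m_Iio_eq_zero : ∀ t : ℕ, lam.m (Set.Iio t) = 0
  | 0 => by simpa using lam.m_empty
  | t + 1 => by
    rw [← Order.succ_eq_add_one, Order.Iio_succ_eq_insert, Set.insert_eq,
      lam.add _ trivial _ trivial (by simp), hlam, FA.m_Iio_eq_zero t, add_zero]

lemma FA.m_eq_one_of_Ici_subset {t : ℕ} {S : Set ℕ} (hS : Set.Ici t ⊆ S) : lam.m S = 1 := by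
  refine le_antisymm (lam.m_le_one trivial) ?_
  calc (1 : ℝ) = lam.m (Set.Ici t) := by
        rw [← Set.compl_Iio, lam.m_compl trivial, FA.m_Iio_eq_zero hlam, sub_zero]
    _ ≤ lam.m S := lam.m_mono trivial trivial hS

/-- `hx` says that `x = ∫ f dlam`; a diffuse `lam` gives mass one to every tail `Set.Ici t`. -/
lemma eq_of_diffuse_approx_of_eventually_eq {f : ℕ → ℝ} {x c : ℝ}
    (hx : ∀ ε : ℝ, 0 < ε → lam.m {n | |f n - c| ≤ ε} = 1 → |x - c| ≤ ε)
    (hf : ∀ᶠ n in atTop, f n = c) : x = c := by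
  obtain ⟨t, ht⟩ := eventually_atTop.1 hf
  refine eq_of_forall_dist_le fun ε hε => hx ε hε (FA.m_eq_one_of_Ici_subset hlam (t := t) ?_)
  intro n hn
  simp [ht n hn, hε.le]

end Diffuse

lemma measurableSet_cyl (ω : BinSeq) (t : ℕ) : MeasurableSet (cyl ω t) := by
  have : cyl ω t = ⋂ i ∈ Finset.range t, (fun ω' : BinSeq => ω' i) ⁻¹' {ω i} := by
    ext ω'; simp [cyl]
  rw [this]
  exact Finset.measurableSet_biInter _ fun i _ => measurable_pi_apply i (measurableSet_singleton _)

lemma measurableSet_infOften : MeasurableSet infOften := by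
  have : infOften = ⋂ T, ⋃ i ≥ T, (fun ω : BinSeq => ω i) ⁻¹' {true} := by
    ext ω; simp [infOften]
  rw [this]
  exact .iInter fun T => .iUnion fun i => .iUnion fun _ =>
    measurable_pi_apply i (measurableSet_singleton _)

def withPrefix {T : ℕ} (v : Fin T → Bool) (b : BinSeq) : BinSeq :=
  fun j => if h : j < T then v ⟨j, h⟩ else b j

lemma withPrefix_of_le {T : ℕ} (v : Fin T → Bool) (b : BinSeq) {j : ℕ} (hj : T ≤ j) :
    withPrefix v b j = b j :=
  dif_neg (Nat.not_lt.2 hj)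

lemma setOf_pinned_subset_iUnion_cyl (b : BinSeq) (T t : ℕ) :
    {ω : BinSeq | ∀ i, T ≤ i → i < t → ω i = b i} ⊆
      ⋃ v : Fin T → Bool, cyl (withPrefix v b) t := by
  intro ω hω
  refine Set.mem_iUnion.2 ⟨fun j => ω j, fun j hj => ?_⟩
  by_cases h : j < T
  · simp [withPrefix, h]
  · rw [withPrefix_of_le _ _ (Nat.le_of_not_lt h)]
    exact hω j (Nat.le_of_not_lt h) hj

section ProductCylinders

variable {P : Measure BinSeq} {p : ℕ → Bool → ℝ≥0∞}
  (hP : ∀ ω t, P (cyl ω t) = ∏ i ∈ Finset.range t, p i (ω i)) (hp : ∀ i b, p i b ≤ 1)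
include hP hp

/-- Pinning the `m` coordinates from `T` on costs at most the `2 ^ T` possible prefixes. -/
lemma measure_setOf_pinned_le (b : BinSeq) (T m : ℕ) :
    P {ω | ∀ i, T ≤ i → i < T + m → ω i = b i} ≤
      2 ^ T * ∏ i ∈ Finset.range m, p (T + i) (b (T + i)) := by
  calc P {ω | ∀ i, T ≤ i → i < T + m → ω i = b i}
      ≤ ∑' v : Fin T → Bool, P (cyl (withPrefix v b) (T + m)) :=
        (measure_mono (setOf_pinned_subset_iUnion_cyl b T _)).trans (measure_iUnion_le _)
    _ ≤ ∑' _ : Fin T → Bool, ∏ i ∈ Finset.range m, p (T + i) (b (T + i)) := by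
        refine ENNReal.tsum_le_tsum fun v => ?_
        rw [hP, Finset.prod_range_add]
        simp only [withPrefix_of_le v b (Nat.le_add_right T _)]
        exact mul_le_of_le_one_left' (Finset.prod_le_one' fun i _ => hp i _)
    _ = 2 ^ T * ∏ i ∈ Finset.range m, p (T + i) (b (T + i)) := by
        simp [tsum_fintype]

lemma measure_infOften_eq_zero {n : ℕ} (hn : ∀ i, n ≤ i → p i true = 0) : P infOften = 0 := by
  have hsub : infOften ⊆ ⋃ i ≥ n, {ω | ∀ j, i ≤ j → j < i + 1 → ω j = (fun _ => true) j} := by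
    intro ω hω
    obtain ⟨i, hi, hωi⟩ := hω n
    exact Set.mem_biUnion hi fun j hij hji => (Nat.le_antisymm hij (Nat.lt_succ_iff.1 hji)) ▸ hωi
  refine measure_mono_null hsub (measure_biUnion_null_iff (Set.to_countable _) |>.2 fun i hi =>
    nonpos_iff_eq_zero.1 ?_)
  simpa [hn i hi] using measure_setOf_pinned_le hP hp (fun _ => true) i 1

lemma measure_compl_infOften_eq_zero {r : ℝ≥0∞} (hr : r < 1) (hpr : ∀ i, p i false ≤ r) :
    P infOftenᶜ = 0 := by
  have hsub : infOftenᶜ ⊆ ⋃ T, {ω : BinSeq | ∀ i, T ≤ i → ω i = false} := by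
    intro ω hω
    obtain ⟨T, hT⟩ := not_forall.1 hω
    exact Set.mem_iUnion.2 ⟨T, fun i hi => Bool.not_eq_true _ ▸ fun h => hT ⟨i, hi, h⟩⟩
  refine measure_mono_null hsub (measure_iUnion_null fun T => ?_)
  have hbound (m : ℕ) : P {ω : BinSeq | ∀ i, T ≤ i → ω i = false} ≤ 2 ^ T * r ^ m :=
    calc P {ω : BinSeq | ∀ i, T ≤ i → ω i = false}
        ≤ P {ω | ∀ i, T ≤ i → i < T + m → ω i = (fun _ => false) i} :=
          measure_mono fun ω hω i hi _ => hω i hi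
      _ ≤ 2 ^ T * ∏ i ∈ Finset.range m, p (T + i) false := measure_setOf_pinned_le hP hp _ T m
      _ ≤ 2 ^ T * r ^ m := by
          gcongr
          simpa using Finset.prod_le_prod' (s := Finset.range m) fun i _ => hpr (T + i)
  have hlim : Tendsto (fun m : ℕ => 2 ^ T * r ^ m) atTop (𝓝 0) := by
    simpa using ENNReal.Tendsto.const_mul (ENNReal.tendsto_pow_atTop_nhds_zero_of_lt_one hr)
      (Or.inr (ENNReal.pow_ne_top ENNReal.ofNat_ne_top))
  exact nonpos_iff_eq_zero.1 (ge_of_tendsto' hlim hbound)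

end ProductCylinders

/-- `P_∞(X_{i+1} = b)`: the coordinate `i` of a `BinSeq` is the paper's `X_{i+1}`. -/
noncomputable def coinProb (i : ℕ) (b : Bool) : ℝ≥0∞ :=
  if b = false then 2⁻¹ ^ (i + 1) else 1 - 2⁻¹ ^ (i + 1)

/-- `P_n(X_{i+1} = b)`. -/
noncomputable def coinProbTrunc (n i : ℕ) (b : Bool) : ℝ≥0∞ :=
  if i + 1 ≤ n then coinProb i b else if b = false then 1 else 0

lemma coinProb_le_one (i : ℕ) (b : Bool) : coinProb i b ≤ 1 := by
  unfold coinProb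
  split_ifs
  exacts [pow_le_one₀ zero_le (ENNReal.inv_le_one.2 one_le_two), tsub_le_self]

lemma coinProb_ne_zero (i : ℕ) (b : Bool) : coinProb i b ≠ 0 := by
  unfold coinProb
  split_ifs
  · exact pow_ne_zero _ (ENNReal.inv_ne_zero.2 ENNReal.ofNat_ne_top)
  · exact (tsub_pos_of_lt (pow_lt_one₀ zero_le (by norm_num)
      (Nat.succ_ne_zero i))).ne'

lemma coinProb_false_le (i : ℕ) : coinProb i false ≤ 2⁻¹ := by
  simpa [coinProb] using pow_le_pow_of_le_one zero_le (ENNReal.inv_le_one.2 one_le_two)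
    (Nat.le_add_left 1 i)

lemma coinProbTrunc_le_one (n i : ℕ) (b : Bool) : coinProbTrunc n i b ≤ 1 := by
  unfold coinProbTrunc
  split_ifs
  exacts [coinProb_le_one i b, le_rfl, zero_le]

lemma coinProbTrunc_of_lt {n i : ℕ} (h : i < n) (b : Bool) : coinProbTrunc n i b = coinProb i b :=
  if_pos h

lemma coinProbTrunc_true_of_le {n i : ℕ} (h : n ≤ i) : coinProbTrunc n i true = 0 := by
  simp [coinProbTrunc, Nat.not_lt.2 h]

lemma absCont_of_le_mul {Ω : Type*} {A : SetAlgebra Ω} {P Q : FA A} (c : ℝ)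
    (h : ∀ S ∈ A.sets, Q.m S ≤ c * P.m S) : AbsCont P Q := fun E hE hP =>
  squeeze_zero (fun n => Q.nonneg _ (hE n)) (fun n => h _ (hE n)) (by simpa using hP.const_mul c)

lemma not_merges_of_cond_gap {A : SetAlgebra BinSeq} {P Q : FA A} {E : Set BinSeq}
    (hE : E ∈ A.sets) {δ : ℝ} (hδ : 0 < δ)
    (h : ∀ ω t, δ ≤ |P.cond E (cyl ω t) - Q.cond E (cyl ω t)|) : ¬ Merges P Q := by
  intro hPQ
  have hall (t : ℕ) : {ω | ∃ E ∈ A.sets, δ / 2 < |P.cond E (cyl ω t) - Q.cond E (cyl ω t)|} =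
      Set.univ :=
    Set.eq_univ_of_forall fun ω => ⟨E, hE, (half_lt_self hδ).trans_le (h ω t)⟩
  have hlim := hPQ (δ / 2) (half_pos hδ)
  simp only [hall, Q.total] at hlim
  exact one_ne_zero (tendsto_nhds_unique tendsto_const_nhds hlim)

open MeasureTheory in
theorem example_no_merging_general
    (A : SetAlgebra BinSeq) (hA : A.sets = {S : Set BinSeq | MeasurableSet S})
    (Pn : ℕ → Measure BinSeq) (Pinf : Measure BinSeq)
    [IsProbabilityMeasure Pinf]
    (hPn : ∀ (n : ℕ) (ω : BinSeq) (t : ℕ), Pn n (cyl ω t) =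
      ∏ i ∈ Finset.range t,
        if i + 1 ≤ n then
          (if ω i = false then ((2:ENNReal)⁻¹) ^ (i + 1) else 1 - ((2:ENNReal)⁻¹) ^ (i + 1))
        else (if ω i = false then 1 else 0))
    (hPinf : ∀ (ω : BinSeq) (t : ℕ), Pinf (cyl ω t) =
      ∏ i ∈ Finset.range t,
        (if ω i = false then ((2:ENNReal)⁻¹) ^ (i + 1) else 1 - ((2:ENNReal)⁻¹) ^ (i + 1)))
    (lam : FA (SetAlgebra.top ℕ)) (hlam : ∀ k : ℕ, lam.m {k} = 0)
    (μ : FA A)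
    (hμ : ∀ E ∈ A.sets, ∀ (c ε : ℝ), 0 < ε →
      lam.m {n : ℕ | |((Pn n) E).toReal - c| ≤ ε} = 1 → |μ.m E - c| ≤ ε)
    (Pfa : FA A) (hPfa : ∀ E : Set BinSeq, Pfa.m E = 2⁻¹ * (Pinf E).toReal + 2⁻¹ * μ.m E)
    (Pinffa : FA A) (hPinffa : ∀ E : Set BinSeq, Pinffa.m E = (Pinf E).toReal) :
    AbsCont Pfa Pinffa ∧
    (∀ (ω : BinSeq) (t : ℕ), Pfa.m (cyl ω t) = (Pinf (cyl ω t)).toReal) ∧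
    (∀ (ω : BinSeq) (t : ℕ),
      Pinffa.cond infOften (cyl ω t) - Pfa.cond infOften (cyl ω t) = 1 / 2) ∧
    ¬ Merges Pfa Pinffa := by
  have hmeas : ∀ S, MeasurableSet S → S ∈ A.sets := fun S hS => hA ▸ hS
  have hPn' : ∀ n ω t, Pn n (cyl ω t) = ∏ i ∈ Finset.range t, coinProbTrunc n i (ω i) := hPn
  have hPinf' : ∀ ω t, Pinf (cyl ω t) = ∏ i ∈ Finset.range t, coinProb i (ω i) := hPinf
  have hcyl_pos (ω : BinSeq) (t : ℕ) : 0 < (Pinf (cyl ω t)).toReal :=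
    ENNReal.toReal_pos (by simp [hPinf', Finset.prod_ne_zero_iff, coinProb_ne_zero])
      (measure_ne_top _ _)
  have hPinf_infOften (S : Set BinSeq) : Pinf (infOften ∩ S) = Pinf S := by
    rw [Set.inter_comm]
    exact measure_inter_conull (measure_compl_infOften_eq_zero hPinf' coinProb_le_one
      ENNReal.one_half_lt_one coinProb_false_le)
  have hμ_cyl (ω : BinSeq) (t : ℕ) : μ.m (cyl ω t) = (Pinf (cyl ω t)).toReal := by
    refine eq_of_diffuse_approx_of_eventually_eq hlam (hμ _ (hmeas _ (measurableSet_cyl ω t)) _)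
      (eventually_atTop.2 ⟨t, fun n hn => ?_⟩)
    rw [hPn', hPinf', Finset.prod_congr rfl fun i hi =>
      coinProbTrunc_of_lt ((Finset.mem_range.1 hi).trans_le hn) _]
  have hμ_infOften (ω : BinSeq) (t : ℕ) : μ.m (infOften ∩ cyl ω t) = 0 := by
    refine eq_of_diffuse_approx_of_eventually_eq hlam
      (hμ _ (hmeas _ (measurableSet_infOften.inter (measurableSet_cyl ω t))) _)
      (.of_forall fun n => ?_)
    rw [measure_mono_null Set.inter_subset_left (measure_infOften_eq_zero (hPn' n)
      (coinProbTrunc_le_one n) fun i => coinProbTrunc_true_of_le), ENNReal.toReal_zero]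
  have hcyl (ω : BinSeq) (t : ℕ) : Pfa.m (cyl ω t) = (Pinf (cyl ω t)).toReal := by
    rw [hPfa, hμ_cyl]; ring
  have hgap (ω : BinSeq) (t : ℕ) :
      Pinffa.cond infOften (cyl ω t) - Pfa.cond infOften (cyl ω t) = 1 / 2 := by
    have := (hcyl_pos ω t).ne'
    simp only [FA.cond, hPinffa, hPfa, hPinf_infOften, hμ_infOften, hμ_cyl]
    field_simp
    ring
  refine ⟨absCont_of_le_mul 2 fun S hS => ?_, hcyl, hgap,
    not_merges_of_cond_gap (hmeas _ measurableSet_infOften) one_half_pos fun ω t => ?_⟩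
  · rw [hPinffa, hPfa]
    linarith [μ.nonneg S hS]
  · rw [abs_sub_comm, hgap]
    norm_num

open MeasureTheory in
/-- Example 1.  `Pn n` is the σ-additive probability with independent
coordinates, `Pn n (X_k = 0) = 2^{-k}` for `k ≤ n` and `= 1` for `k > n` (characterized
by its cylinder values, where coordinate `i` is `X_{i+1}`); `Pinf` has
`Pinf (X_k = 0) = 2^{-k}` for all `k`.  `lam` is a finitely additive probability on ℕ
vanishing on singletons, and `μ = ∫ Pn dλ(n)` (characterized by: if the values
`(Pn n E)` lie within `ε` of `c` on a set of `λ`-measure one, then `μ(E)` is within `ε`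
of `c`).  `Pfa = ½ Pinf + ½ μ` and `Pinffa` is `Pinf` viewed as finitely additive.
Then `Pinf ≪ Pfa`, `Pfa` agrees with `Pinf` on cylinders,
`Pinf(A|ωᵗ) − Pfa(A|ωᵗ) = 1/2` everywhere for the event `A` = "1 infinitely often",
and consequently `Pfa` does not merge with `Pinf`. -/
theorem example_no_merging
    (A : SetAlgebra BinSeq) (hA : A.sets = {S : Set BinSeq | MeasurableSet S})
    (Pn : ℕ → Measure BinSeq) (Pinf : Measure BinSeq)
    [∀ n, IsProbabilityMeasure (Pn n)] [IsProbabilityMeasure Pinf]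
    (hPn : ∀ (n : ℕ) (ω : BinSeq) (t : ℕ), Pn n (cyl ω t) =
      ∏ i ∈ Finset.range t,
        if i + 1 ≤ n then
          (if ω i = false then ((2:ENNReal)⁻¹) ^ (i + 1) else 1 - ((2:ENNReal)⁻¹) ^ (i + 1))
        else (if ω i = false then 1 else 0))
    (hPinf : ∀ (ω : BinSeq) (t : ℕ), Pinf (cyl ω t) =
      ∏ i ∈ Finset.range t,
        (if ω i = false then ((2:ENNReal)⁻¹) ^ (i + 1) else 1 - ((2:ENNReal)⁻¹) ^ (i + 1)))
    (lam : FA (SetAlgebra.top ℕ)) (hlam : ∀ k : ℕ, lam.m {k} = 0)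
    (μ : FA A)
    (hμ : ∀ E ∈ A.sets, ∀ (c ε : ℝ), 0 < ε →
      lam.m {n : ℕ | |((Pn n) E).toReal - c| ≤ ε} = 1 → |μ.m E - c| ≤ ε)
    (Pfa : FA A) (hPfa : ∀ E : Set BinSeq, Pfa.m E = 2⁻¹ * (Pinf E).toReal + 2⁻¹ * μ.m E)
    (Pinffa : FA A) (hPinffa : ∀ E : Set BinSeq, Pinffa.m E = (Pinf E).toReal) :
    AbsCont Pfa Pinffa ∧
    (∀ (ω : BinSeq) (t : ℕ), Pfa.m (cyl ω t) = (Pinf (cyl ω t)).toReal) ∧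
    (∀ (ω : BinSeq) (t : ℕ),
      Pinffa.cond infOften (cyl ω t) - Pfa.cond infOften (cyl ω t) = 1 / 2) ∧
    ¬ Merges Pfa Pinffa :=
  example_no_merging_general A hA Pn Pinf hPn hPinf lam hlam μ hμ Pfa hPfa Pinffa hPinffa
end

section
/- Let Ω = {0,1}^∞. For every ε ∈ (0,1] there exists a test T, mapping each strongly nonatomic finitely additive probability P with the Blackwell–Dubins property to an open set T(P) ⊆ Ω, such that (i) P(T(P)) ≤ ε for every such P, and (ii) for every finitely supported probability ζ on the set of such P's there is a cylinder C_ζ with ζ({P : ω ∉ T(P)}) = 0 for every ω ∈ C_ζ. -/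
open Filter Topology
open scoped Classical


/-!
If a strongly nonatomic opinion `P` with the Blackwell–Dubins property gave every cylinder
`ω₀ᵗ` around a path `ω₀` probability at least `ε`, then `δ = lim P(ω₀ᵗ)` would be positive and
`E ↦ lim P(E ∩ ω₀ᵗ)` a finitely additive charge of total mass `δ` sitting at the end of `ω₀`.
Halving repeatedly, strong nonatomicity yields an event `S` with `P(S) < δ` carrying a part
`τ > 0` of that charge. Renormalising it, `Q(X) = lim P(X ∩ S ∩ ω₀ᵗ) / τ`, gives `Q ≤ P / τ`,
hence `Q ≪ P`; yet `Q(S | ω₀ᵗ) = 1` for all `t` while `P(S | ω₀ᵗ) → τ / δ < 1`, so the event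
where the conditionals of `P` and `Q` given `ωᵗ` stay apart (a finite union of cylinders of
length `t`, hence in the algebra) contains `ω₀ᵗ`, which has `Q`-probability 1: `P` does not
merge with `Q`. Thus every such `P` gives probability at most `ε` to some
cylinder around a fixed path, and rejecting `P` on that cylinder is a test that no finite
mixture of opinions passes anywhere on the longest of the cylinders involved.
-/

lemma cyl_anti {X : Type*} (ω : ℕ → X) {s t : ℕ} (h : s ≤ t) : cyl ω t ⊆ cyl ω s :=
  fun _ hω' i hi => hω' i (hi.trans_le h)

lemma cyl_zero {X : Type*} (ω : ℕ → X) : cyl ω 0 = Set.univ := by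
  ext; simp [cyl]

lemma cyl_eq_of_mem {X : Type*} {ω₀ ω : ℕ → X} {t : ℕ} (h : ω ∈ cyl ω₀ t) :
    cyl ω t = cyl ω₀ t := by
  ext ω'
  exact ⟨fun h' i hi => (h' i hi).trans (h i hi), fun h' i hi => (h' i hi).trans (h i hi).symm⟩

lemma cyl_eq_pi {X : Type*} (ω : ℕ → X) (t : ℕ) : cyl ω t = (Set.Iio t).pi fun i => {ω i} := by
  ext; simp [cyl]

lemma isOpen_cyl (ω : BinSeq) (t : ℕ) : IsOpen (cyl ω t) := by
  rw [cyl_eq_pi]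
  exact isOpen_set_pi (Set.finite_Iio t) fun _ _ => isOpen_discrete _

lemma finite_range_cyl {X : Type*} [Finite X] (t : ℕ) :
    (Set.range fun ω : ℕ → X => cyl ω t).Finite := by
  refine (Set.finite_range fun x : Fin t → X => {ω' : ℕ → X | ∀ i : Fin t, ω' i = x i}).subset ?_
  rintro _ ⟨ω, rfl⟩
  refine ⟨fun i => ω i, ?_⟩
  ext ω'
  exact ⟨fun h i hi => h ⟨i, hi⟩, fun h i => h i i.2⟩

namespace SetAlgebra

variable {Ω : Type*} (A : SetAlgebra Ω)

lemma empty_mem_s18 : ∅ ∈ A.sets := by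
  simpa using A.compl_mem _ A.univ_mem

lemma inter_mem {S T : Set Ω} (hS : S ∈ A.sets) (hT : T ∈ A.sets) : S ∩ T ∈ A.sets := by
  simpa [Set.compl_union] using
    A.compl_mem _ (A.union_mem _ (A.compl_mem _ hS) _ (A.compl_mem _ hT))

lemma diff_mem_s18 {S T : Set Ω} (hS : S ∈ A.sets) (hT : T ∈ A.sets) : S \ T ∈ A.sets :=
  A.inter_mem hS (A.compl_mem _ hT)

lemma sUnion_mem {s : Set (Set Ω)} (hs : s.Finite) (h : s ⊆ A.sets) : ⋃₀ s ∈ A.sets := by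
  induction s, hs using Set.Finite.induction_on with
  | empty => simpa using A.empty_mem_s18
  | @insert S s _ _ ih =>
    rw [Set.sUnion_insert]
    exact A.union_mem _ (h (Set.mem_insert S s)) _ (ih ((Set.subset_insert S s).trans h))

end SetAlgebra

lemma SetAlgebra.setOf_cyl_mem (A : SetAlgebra BinSeq)
    (hcyl : ∀ (ω : BinSeq) (t : ℕ), cyl ω t ∈ A.sets) (p : Set BinSeq → Prop) (t : ℕ) :
    {ω | p (cyl ω t)} ∈ A.sets := by
  have hunion : {ω | p (cyl ω t)} = ⋃₀ {C ∈ Set.range fun ω : BinSeq => cyl ω t | p C} := by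
    ext ω
    constructor
    · intro h
      exact ⟨cyl ω t, ⟨⟨ω, rfl⟩, h⟩, fun _ _ => rfl⟩
    · rintro ⟨_, ⟨⟨ω', rfl⟩, h⟩, hω⟩
      rwa [Set.mem_ofPred_eq, cyl_eq_of_mem hω]
  rw [hunion]
  refine A.sUnion_mem ((finite_range_cyl t).subset (Set.sep_subset _ _)) ?_
  rintro _ ⟨⟨ω, rfl⟩, _⟩
  exact hcyl ω t

namespace FA

variable {Ω : Type*} {A : SetAlgebra Ω} (P : FA A)

lemma add_diff {F S : Set Ω} (hF : F ∈ A.sets) (hS : S ∈ A.sets) (h : F ⊆ S) :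
    P.m F + P.m (S \ F) = P.m S := by
  rw [← P.add F hF _ (A.diff_mem_s18 hS hF) disjoint_sdiff_self_right, Set.union_sdiff_cancel h]

lemma mono {S T : Set Ω} (hS : S ∈ A.sets) (hT : T ∈ A.sets) (h : S ⊆ T) : P.m S ≤ P.m T := by
  linarith [P.add_diff hS hT h, P.nonneg _ (A.diff_mem_s18 hT hS)]

end FA

namespace FA

noncomputable def tail {A : SetAlgebra BinSeq} (P : FA A) (ω₀ : BinSeq) (E : Set BinSeq) : ℝ :=
  ⨅ t, P.m (E ∩ cyl ω₀ t)

section Tail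

variable {A : SetAlgebra BinSeq} {P : FA A} {ω₀ : BinSeq}
  (hcyl : ∀ (ω : BinSeq) (t : ℕ), cyl ω t ∈ A.sets)
include hcyl

lemma bddBelow_inter_cyl {E : Set BinSeq} (hE : E ∈ A.sets) :
    BddBelow (Set.range fun t => P.m (E ∩ cyl ω₀ t)) :=
  ⟨0, by rintro _ ⟨t, rfl⟩; exact P.nonneg _ (A.inter_mem hE (hcyl ω₀ t))⟩

lemma tendsto_tail {E : Set BinSeq} (hE : E ∈ A.sets) :
    Tendsto (fun t => P.m (E ∩ cyl ω₀ t)) atTop (𝓝 (P.tail ω₀ E)) :=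
  tendsto_atTop_ciInf
    (fun _ _ h => P.mono (A.inter_mem hE (hcyl ω₀ _)) (A.inter_mem hE (hcyl ω₀ _))
      (Set.inter_subset_inter_right E (cyl_anti ω₀ h)))
    (bddBelow_inter_cyl hcyl hE)

lemma tail_nonneg {E : Set BinSeq} (hE : E ∈ A.sets) : 0 ≤ P.tail ω₀ E :=
  le_ciInf fun t => P.nonneg _ (A.inter_mem hE (hcyl ω₀ t))

lemma tail_le {E : Set BinSeq} (hE : E ∈ A.sets) : P.tail ω₀ E ≤ P.m E := by
  have h := ciInf_le (bddBelow_inter_cyl (P := P) (ω₀ := ω₀) hcyl hE) 0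
  rwa [cyl_zero, Set.inter_univ] at h

lemma tail_union {E F : Set BinSeq} (hE : E ∈ A.sets) (hF : F ∈ A.sets) (hEF : Disjoint E F) :
    P.tail ω₀ (E ∪ F) = P.tail ω₀ E + P.tail ω₀ F := by
  refine tendsto_nhds_unique (tendsto_tail hcyl (A.union_mem _ hE _ hF)) ?_
  simp_rw [Set.union_inter_distrib_right]
  refine ((tendsto_tail hcyl hE).add (tendsto_tail hcyl hF)).congr fun t => ?_
  exact (P.add _ (A.inter_mem hE (hcyl ω₀ t)) _ (A.inter_mem hF (hcyl ω₀ t))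
    (hEF.mono Set.inter_subset_left Set.inter_subset_left)).symm

lemma tail_inter_cyl {E : Set BinSeq} (hE : E ∈ A.sets) (t : ℕ) :
    P.tail ω₀ (E ∩ cyl ω₀ t) = P.tail ω₀ E := by
  refine tendsto_nhds_unique (tendsto_tail hcyl (A.inter_mem hE (hcyl ω₀ t))) ?_
  refine (tendsto_tail hcyl hE).congr' ?_
  filter_upwards [eventually_ge_atTop t] with s hs
  rw [Set.inter_assoc, Set.inter_eq_self_of_subset_right (cyl_anti ω₀ hs)]

section StronglyNonatomic

variable (hSN : StronglyNonatomic P)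
include hSN

lemma exists_half_tail_pos {S : Set BinSeq} (hS : S ∈ A.sets) (hτ : 0 < P.tail ω₀ S) :
    ∃ F ∈ A.sets, P.m F = P.m S / 2 ∧ 0 < P.tail ω₀ F := by
  obtain ⟨F, hF, hFS, hPF⟩ := hSN S hS (1 / 2) (by norm_num) (by norm_num)
  have hSF := A.diff_mem_s18 hS hF
  have hsplit := tail_union (P := P) (ω₀ := ω₀) hcyl hF hSF disjoint_sdiff_self_right
  rw [Set.union_sdiff_cancel hFS] at hsplit
  rcases lt_or_ge 0 (P.tail ω₀ F) with hpos | hzero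
  · exact ⟨F, hF, by linarith, hpos⟩
  · exact ⟨S \ F, hSF, by linarith [P.add_diff hF hS hFS], by linarith⟩

lemma exists_small_tail_pos (hδ : 0 < P.tail ω₀ Set.univ) {η : ℝ} (hη : 0 < η) :
    ∃ S ∈ A.sets, P.m S < η ∧ 0 < P.tail ω₀ S := by
  have hhalving : ∀ k : ℕ, ∃ S ∈ A.sets, P.m S = (1 / 2) ^ k ∧ 0 < P.tail ω₀ S := by
    intro k
    induction k with
    | zero => exact ⟨Set.univ, A.univ_mem, by simp [P.total], hδ⟩
    | succ k ih =>
      obtain ⟨S, hS, hPS, hτ⟩ := ih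
      obtain ⟨F, hF, hPF, hτF⟩ := exists_half_tail_pos hcyl hSN hS hτ
      exact ⟨F, hF, by rw [hPF, hPS, pow_succ]; ring, hτF⟩
  obtain ⟨k, hk⟩ := exists_pow_lt_of_lt_one hη (by norm_num : (1 / 2 : ℝ) < 1)
  obtain ⟨S, hS, hPS, hτ⟩ := hhalving k
  exact ⟨S, hS, hPS ▸ hk, hτ⟩

end StronglyNonatomic

lemma tendsto_cond_cyl {S : Set BinSeq} (hS : S ∈ A.sets) (hδ : P.tail ω₀ Set.univ ≠ 0) :
    Tendsto (fun t => P.cond S (cyl ω₀ t)) atTop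
      (𝓝 (P.tail ω₀ S / P.tail ω₀ Set.univ)) := by
  have hcyl_lim := tendsto_tail (P := P) (ω₀ := ω₀) hcyl A.univ_mem
  simp only [Set.univ_inter] at hcyl_lim
  exact (tendsto_tail hcyl hS).div hcyl_lim hδ

noncomputable def tailCond {S : Set BinSeq} (hS : S ∈ A.sets) (hτ : 0 < P.tail ω₀ S) : FA A where
  m X := P.tail ω₀ (X ∩ S) / P.tail ω₀ S
  nonneg X hX := div_nonneg (tail_nonneg hcyl (A.inter_mem hX hS)) hτ.le
  total := by rw [Set.univ_inter, div_self hτ.ne']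
  add X hX Y hY hXY := by
    rw [Set.union_inter_distrib_right, ← add_div, tail_union hcyl (A.inter_mem hX hS)
      (A.inter_mem hY hS) (hXY.mono Set.inter_subset_left Set.inter_subset_left)]

variable {S : Set BinSeq} (hS : S ∈ A.sets) (hτ : 0 < P.tail ω₀ S)

lemma absCont_tailCond : AbsCont P (tailCond hcyl hS hτ) := by
  intro E hE hP
  refine squeeze_zero (fun n => (tailCond hcyl hS hτ).nonneg _ (hE n)) (fun n => ?_)
    (by simpa using hP.div_const (P.tail ω₀ S))
  have hES := A.inter_mem (hE n) hS
  exact div_le_div_of_nonneg_right ((tail_le hcyl hES).trans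
    (P.mono hES (hE n) Set.inter_subset_left)) hτ.le

lemma tailCond_cyl (t : ℕ) : (tailCond hcyl hS hτ).m (cyl ω₀ t) = 1 := by
  change P.tail ω₀ _ / _ = 1
  rw [Set.inter_comm, tail_inter_cyl hcyl hS, div_self hτ.ne']

lemma cond_tailCond_cyl (t : ℕ) : (tailCond hcyl hS hτ).cond S (cyl ω₀ t) = 1 := by
  rw [FA.cond, tailCond_cyl, div_one]
  change P.tail ω₀ _ / _ = 1
  rw [Set.inter_right_comm, Set.inter_self, tail_inter_cyl hcyl hS, div_self hτ.ne']

lemma not_merges_tailCond (hτδ : P.tail ω₀ S < P.tail ω₀ Set.univ) :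
    ¬ Merges P (tailCond hcyl hS hτ) := by
  intro hmerge
  set Q := tailCond hcyl hS hτ
  set r := P.tail ω₀ S / P.tail ω₀ Set.univ
  have hδ : 0 < P.tail ω₀ Set.univ := hτ.trans hτδ
  have hr : r < 1 := (div_lt_one hδ).2 hτδ
  have hgap : 0 < (1 - r) / 2 := by linarith
  obtain ⟨t, hPcond, hQbad⟩ := (((tendsto_cond_cyl hcyl hS hδ.ne').eventually_lt_const
    (by linarith : r < 1 - (1 - r) / 2)).and
    ((hmerge _ hgap).eventually_lt_const one_pos)).exists
  have hbad : cyl ω₀ t ⊆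
      {ω | ∃ E ∈ A.sets, (1 - r) / 2 < |P.cond E (cyl ω t) - Q.cond E (cyl ω t)|} := by
    intro ω hω
    refine ⟨S, hS, ?_⟩
    rw [cyl_eq_of_mem hω, cond_tailCond_cyl, abs_sub_comm, abs_of_pos (by linarith)]
    linarith
  have hQ := Q.mono (hcyl ω₀ t) (A.setOf_cyl_mem hcyl
    (fun C => ∃ E ∈ A.sets, (1 - r) / 2 < |P.cond E C - Q.cond E C|) t) hbad
  rw [tailCond_cyl] at hQ
  linarith

end Tail

end FA

lemma BDProp.exists_cyl_le {A : SetAlgebra BinSeq} {P : FA A} (hBD : BDProp P)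
    (hcyl : ∀ (ω : BinSeq) (t : ℕ), cyl ω t ∈ A.sets) (hSN : StronglyNonatomic P)
    (ω₀ : BinSeq) {ε : ℝ} (hε : 0 < ε) : ∃ t, P.m (cyl ω₀ t) ≤ ε := by
  by_contra! hbig
  have hδ : ε ≤ P.tail ω₀ Set.univ := le_ciInf fun t => by simpa using (hbig t).le
  obtain ⟨S, hS, hPS, hτ⟩ := FA.exists_small_tail_pos hcyl hSN (hε.trans_le hδ) hε
  exact FA.not_merges_tailCond hcyl hS hτ ((FA.tail_le hcyl hS).trans_lt (hPS.trans_le hδ))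
    (hBD _ (FA.absCont_tailCond hcyl hS hτ))

theorem exists_nonmanipulable_test_general
    (A : SetAlgebra BinSeq)
    (hcyl : ∀ (ω : BinSeq) (t : ℕ), cyl ω t ∈ A.sets)
    (ε : ℝ) (hε0 : 0 < ε) :
    ∃ T : FA A → Set BinSeq,
      (∀ P : FA A, StronglyNonatomic P → BDProp P → IsOpen (T P) ∧ P.m (T P) ≤ ε) ∧
      (∀ (n : ℕ) (w : Fin n → ℝ) (Ps : Fin n → FA A),
        (∀ i, 0 ≤ w i) → (∑ i, w i) = 1 →
        (∀ i, StronglyNonatomic (Ps i) ∧ BDProp (Ps i)) →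
        ∃ (ω₀ : BinSeq) (t : ℕ), ∀ ω ∈ cyl ω₀ t,
          (∑ i ∈ Finset.univ.filter (fun i => ω ∉ T (Ps i)), w i) = 0) := by
  have hsmall : ∀ P : FA A, ∃ t, StronglyNonatomic P → BDProp P →
      P.m (cyl (fun _ => false) t) ≤ ε := by
    intro P
    by_cases hP : StronglyNonatomic P ∧ BDProp P
    · obtain ⟨t, ht⟩ := hP.2.exists_cyl_le hcyl hP.1 _ hε0
      exact ⟨t, fun _ _ => ht⟩
    · exact ⟨0, fun hSN hBD => (hP ⟨hSN, hBD⟩).elim⟩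
  choose t ht using hsmall
  refine ⟨fun P => cyl (fun _ => false) (t P), fun P hSN hBD => ⟨isOpen_cyl _ _, ht P hSN hBD⟩, ?_⟩
  intro n w Ps _ _ _
  refine ⟨fun _ => false, Finset.univ.sup fun i => t (Ps i), fun ω hω => ?_⟩
  refine Finset.sum_eq_zero fun i hi => ((Finset.mem_filter.1 hi).2 ?_).elim
  exact cyl_anti _ (Finset.le_sup (Finset.mem_univ i)) hω

/-- Theorem 3: for every `ε ∈ (0,1]` there is a test `T` mapping opinions
with the Blackwell–Dubins property to open sets such that (i) `T` controls type I error
with probability `1 − ε` on `Δ_BD`, and (ii) `T` is nonmanipulable: for every finitely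
supported strategy `ζ` over `Δ_BD` there is a cylinder on which the `ζ`-probability of
passing is `0`. -/
theorem exists_nonmanipulable_test
    (A : SetAlgebra BinSeq) (hσ : A.IsSigmaAlgebra)
    (hcyl : ∀ (ω : BinSeq) (t : ℕ), cyl ω t ∈ A.sets)
    (ε : ℝ) (hε0 : 0 < ε) (hε1 : ε ≤ 1) :
    ∃ T : FA A → Set BinSeq,
      (∀ P : FA A, StronglyNonatomic P → BDProp P → IsOpen (T P) ∧ P.m (T P) ≤ ε) ∧
      (∀ (n : ℕ) (w : Fin n → ℝ) (Ps : Fin n → FA A),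
        (∀ i, 0 ≤ w i) → (∑ i, w i) = 1 →
        (∀ i, StronglyNonatomic (Ps i) ∧ BDProp (Ps i)) →
        ∃ (ω₀ : BinSeq) (t : ℕ), ∀ ω ∈ cyl ω₀ t,
          (∑ i ∈ Finset.univ.filter (fun i => ω ∉ T (Ps i)), w i) = 0) :=
  exists_nonmanipulable_test_general A hcyl ε hε0
end
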